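/- Let X be a compact metric space, ρ and ρ_N finite Borel measures on X with ρ_N converging weakly to ρ, and k : X × X → ℝ continuous. Then for each f ∈ C(X), the functions x ↦ ∫ k(x, y) f(y) dρ_N(y) converge uniformly on X to x ↦ ∫ k(x, y) f(y) dρ(y). -/

import Mathlib

/-!
Write `κ x := k (x, ·) * f ∈ C(X, ℝ)`, so that the `N`-th function is `Λ_N ∘ κ` with
`Λ_N g := ∫ g dρ_N`. Weak convergence is pointwise convergence `Λ_N → Λ` on `C(X, ℝ)`, and applied
to `g = 1` it bounds the masses `ρ_N(X)`, so the `Λ_N` are Lipschitz with a common constant. The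
family `Λ_N ∘ κ` is therefore equicontinuous, and on the compact space `X` pointwise convergence of
an equicontinuous family is uniform.
-/

open MeasureTheory Filter Set Topology

theorem UniformEquicontinuous.equicontinuous_comp {ι X β α : Type*} [TopologicalSpace X]
    [UniformSpace β] [UniformSpace α] {Λ : ι → β → α} (hΛ : UniformEquicontinuous Λ)
    {κ : X → β} (hκ : Continuous κ) : Equicontinuous fun i => Λ i ∘ κ :=
  fun x₀ _ hU => (Uniform.tendsto_nhds_right.1 (hκ.tendsto x₀)).eventually (hΛ _ hU)

theorem UniformEquicontinuous.tendstoUniformly_comp {ι X β α : Type*} [TopologicalSpace X]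
    [CompactSpace X] [UniformSpace β] [UniformSpace α] {Λ : ι → β → α} {Λ₀ : β → α}
    {l : Filter ι} (hΛ : UniformEquicontinuous Λ)
    (hlim : ∀ b, Tendsto (fun i => Λ i b) l (𝓝 (Λ₀ b))) {κ : X → β} (hκ : Continuous κ) :
    TendstoUniformly (fun i x => Λ i (κ x)) (fun x => Λ₀ (κ x)) l := by
  refine UniformFun.tendsto_iff_tendstoUniformly.1
    (((hΛ.equicontinuous_comp hκ).tendsto_uniformFun_iff_pi l _).2 ?_)
  exact tendsto_pi_nhds.2 fun x => hlim (κ x)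

theorem ContinuousMap.dist_integral_le {X : Type*} [TopologicalSpace X] [CompactSpace X]
    [MeasurableSpace X] [OpensMeasurableSpace X] (μ : Measure X) [IsFiniteMeasure μ]
    (g h : C(X, ℝ)) :
    dist (∫ x, g x ∂μ) (∫ x, h x ∂μ) ≤ μ.real univ * dist g h := by
  open BoundedContinuousFunction in
  rw [dist_eq_norm, ← integral_sub (f := fun x => g x) (g := fun x => h x)
    ((mkOfCompact g).integrable μ) ((mkOfCompact h).integrable μ), dist_eq_norm,
    ← norm_mkOfCompact]
  exact (mkOfCompact (g - h)).norm_integral_le_mul_norm μ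

theorem stmt12_general
    {X : Type*} [MetricSpace X] [CompactSpace X]
    [MeasurableSpace X] [BorelSpace X]
    (ρ : Measure X)
    (ρN : ℕ → Measure X) [∀ N, IsFiniteMeasure (ρN N)]
    (hweak : ∀ g : C(X, ℝ), Tendsto (fun N => ∫ y, g y ∂(ρN N)) atTop (nhds (∫ y, g y ∂ρ)))
    (k : X × X → ℝ) (hk : Continuous k) :
    ∀ f : C(X, ℝ),
      TendstoUniformly (fun N x => ∫ y, k (x, y) * f y ∂(ρN N))
        (fun x => ∫ y, k (x, y) * f y ∂ρ) atTop := by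
  intro f
  obtain ⟨K, hK⟩ : BddAbove (range fun N => (ρN N).real univ) :=
    (by simpa using hweak 1 : Tendsto (fun N => (ρN N).real univ) atTop _).bddAbove_range
  have hlip (N : ℕ) : LipschitzWith K.toNNReal fun g : C(X, ℝ) => ∫ y, g y ∂(ρN N) :=
    .of_dist_le' fun g h => (ContinuousMap.dist_integral_le _ g h).trans
      (mul_le_mul_of_nonneg_right (hK (mem_range_self N)) dist_nonneg)
  have hκ : Continuous fun x => ContinuousMap.curry ⟨k, hk⟩ x * f :=
    (ContinuousMap.curry ⟨k, hk⟩).continuous.mul continuous_const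
  exact (LipschitzWith.uniformEquicontinuous _ _ hlip).tendstoUniformly_comp hweak hκ

/-- If finite Borel measures `ρ_N` on a compact metric space converge weakly to `ρ`, and
`k` is a continuous kernel, then for each continuous `f` the functions
`x ↦ ∫ k (x, y) f y dρ_N(y)` converge uniformly to `x ↦ ∫ k (x, y) f y dρ(y)`. -/
theorem stmt12
    {X : Type*} [MetricSpace X] [CompactSpace X]
    [MeasurableSpace X] [BorelSpace X]
    (ρ : Measure X) [IsFiniteMeasure ρ]
    (ρN : ℕ → Measure X) [∀ N, IsFiniteMeasure (ρN N)]
    (hweak : ∀ g : C(X, ℝ), Tendsto (fun N => ∫ y, g y ∂(ρN N)) atTop (nhds (∫ y, g y ∂ρ)))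
    (k : X × X → ℝ) (hk : Continuous k) :
    ∀ f : C(X, ℝ),
      TendstoUniformly (fun N x => ∫ y, k (x, y) * f y ∂(ρN N))
        (fun x => ∫ y, k (x, y) * f y ∂ρ) atTop :=
  stmt12_general ρ ρN hweak k hk
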